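/- arXiv:1408.1862 — 6 statements merged into one kernel-verified Lean document; each statement's English description precedes it below -/
import Mathlib

section
/- Let w ≥ 2 and let a = (a_1,…,a_w) ∈ {0,1}^w be a convergent word, i.e. a_1 = 1 and a_w = 0. Then I(a) = I(a*), where a* = (1−a_w, 1−a_{w−1}, …, 1−a_1) is the reversed word with 0 and 1 interchanged (which is again convergent). -/
open MeasureTheory

/-- The open simplex 0 < t₁ < ⋯ < t_w < 1. -/
def openSimplex (w : ℕ) : Set (Fin w → ℝ) :=
  {t | (∀ i, 0 < t i ∧ t i < 1) ∧ ∀ i j : Fin w, i < j → t i < t j}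

/-- The iterated integral `I(a)` attached to a word `a` of length `w` in the letters `{0,1}`
(given as a function `ℕ → ℕ`, only the values `a 0, …, a (w-1)` being relevant), where the
letter `1` contributes the form `dt/(1-t)` and the letter `0` the form `dt/t`. -/
noncomputable def wordIntegral (w : ℕ) (a : ℕ → ℕ) : ℝ :=
  ∫ t in openSimplex w, ∏ i : Fin w, (if a i = 1 then (1 - t i)⁻¹ else (t i)⁻¹)

/-- The duality map on `ℝ^w` : `t ↦ (1 - t_{w-1-i})_i`, as a measurable equiv. -/
def dualMap (w : ℕ) : (Fin w → ℝ) ≃ᵐ (Fin w → ℝ) where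
  toFun x := fun i => 1 - x (Fin.rev i)
  invFun x := fun i => 1 - x (Fin.rev i)
  left_inv x := by funext i; simp [Fin.rev_rev]
  right_inv x := by funext i; simp [Fin.rev_rev]
  measurable_toFun :=
    measurable_pi_iff.mpr fun i => (measurable_const.sub (measurable_pi_apply _))
  measurable_invFun :=
    measurable_pi_iff.mpr fun i => (measurable_const.sub (measurable_pi_apply _))

lemma dualMap_measurePreserving (w : ℕ) :
    MeasurePreserving (dualMap w) (volume : Measure (Fin w → ℝ)) volume := by
  have h1 : MeasurePreserving (fun x : ℝ => 1 - x) volume volume :=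
    Measure.measurePreserving_sub_left volume 1
  have h2 : MeasurePreserving (fun (x : Fin w → ℝ) (i : Fin w) => 1 - x i)
      (volume : Measure (Fin w → ℝ)) volume :=
    volume_preserving_pi (fun _ => h1)
  have h3 := volume_measurePreserving_piCongrLeft (fun _ : Fin w => ℝ) Fin.revPerm
  have := h2.comp h3
  convert this using 1
  funext x
  funext i
  show (1 : ℝ) - x (Fin.rev i) = 1 - (MeasurableEquiv.piCongrLeft (fun _ : Fin w => ℝ)
      Fin.revPerm x i)
  congr 1
  have := MeasurableEquiv.piCongrLeft_apply_apply (β := fun _ : Fin w => ℝ) Fin.revPerm x (Fin.rev i)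
  simpa [Fin.rev_rev] using this.symm

lemma measurableSet_openSimplex (w : ℕ) : MeasurableSet (openSimplex w) := by
  have : openSimplex w =
      (⋂ i : Fin w, ({t : Fin w → ℝ | 0 < t i} ∩ {t | t i < 1})) ∩
      ⋂ i : Fin w, ⋂ j : Fin w, ⋂ (_ : i < j), {t : Fin w → ℝ | t i < t j} := by
    ext t
    simp only [openSimplex, Set.mem_setOf_eq, Set.mem_inter_iff, Set.mem_iInter,
      Set.mem_setOf_eq, forall_and]
  rw [this]
  refine MeasurableSet.inter (MeasurableSet.iInter fun i => MeasurableSet.inter ?_ ?_)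
    (MeasurableSet.iInter fun i => MeasurableSet.iInter fun j => MeasurableSet.iInter fun _ => ?_)
  · exact measurableSet_lt measurable_const (measurable_pi_apply i)
  · exact measurableSet_lt (measurable_pi_apply i) measurable_const
  · exact measurableSet_lt (measurable_pi_apply i) (measurable_pi_apply j)

lemma dualMap_preimage (w : ℕ) : (dualMap w) ⁻¹' openSimplex w = openSimplex w := by
  ext x
  simp only [Set.mem_preimage, openSimplex, Set.mem_setOf_eq, dualMap,
    MeasurableEquiv.coe_mk, Equiv.coe_fn_mk]
  constructor
  · rintro ⟨hb, hm⟩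
    refine ⟨fun i => ?_, fun i j hij => ?_⟩
    · have := hb (Fin.rev i)
      rw [Fin.rev_rev] at this
      constructor <;> linarith [this.1, this.2]
    · have := hm (Fin.rev j) (Fin.rev i) (by rwa [Fin.rev_lt_rev])
      rw [Fin.rev_rev, Fin.rev_rev] at this
      linarith
  · rintro ⟨hb, hm⟩
    refine ⟨fun i => ?_, fun i j hij => ?_⟩
    · have := hb (Fin.rev i)
      constructor <;> linarith [this.1, this.2]
    · have := hm (Fin.rev j) (Fin.rev i) (by rwa [Fin.rev_lt_rev])
      linarith

/-- Duality for iterated integrals: for a convergent word `a` (first letter 1, last letter 0),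
`I(a) = I(a*)` where `a*` is the reversal of `a` with 0 and 1 interchanged. -/
theorem stmt2 (w : ℕ) (hw : 2 ≤ w) (a : ℕ → ℕ)
    (hval : ∀ i < w, a i = 0 ∨ a i = 1)
    (h1 : a 0 = 1) (h0 : a (w - 1) = 0) :
    wordIntegral w a = wordIntegral w (fun k => 1 - a (w - 1 - k)) := by
  unfold wordIntegral
  have key := (dualMap_measurePreserving w).setIntegral_preimage_emb
    (dualMap w).measurableEmbedding
    (fun t : Fin w → ℝ => ∏ i : Fin w, (if a i = 1 then (1 - t i)⁻¹ else (t i)⁻¹))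
    (openSimplex w)
  rw [← key, dualMap_preimage]
  refine setIntegral_congr_fun (measurableSet_openSimplex w) (fun x _ => ?_)
  show (∏ i : Fin w, (if a i = 1 then (1 - (dualMap w) x i)⁻¹ else ((dualMap w) x i)⁻¹))
      = ∏ i : Fin w, (if (1 : ℕ) - a (w - 1 - (i : ℕ)) = 1 then (1 - x i)⁻¹ else (x i)⁻¹)
  rw [← Equiv.prod_comp Fin.revPerm (fun i : Fin w => (if a (i : ℕ) = 1 then (1 - (dualMap w) x i)⁻¹
      else ((dualMap w) x i)⁻¹))]
  refine Finset.prod_congr rfl (fun j _ => ?_)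
  have hdm : ∀ i : Fin w, (dualMap w) x i = 1 - x (Fin.rev i) := fun i => rfl
  have hrev : ((Fin.revPerm j : Fin w) : ℕ) = w - 1 - (j : ℕ) := by
    simp [Fin.val_rev]
    omega
  have hj : w - 1 - (j : ℕ) < w := by omega
  have heq : w - ((j : ℕ) + 1) = w - 1 - (j : ℕ) := by omega
  rcases hval _ hj with h | h
  · simp [hdm, hrev, heq, h, Fin.rev_rev]
  · simp [hdm, hrev, heq, h, Fin.rev_rev]
end

section
/- Let a ≤ b ≤ c be real numbers and let f_1,…,f_n : [a,c] → ℝ be continuous functions. Then ∫_{a≤t_1≤⋯≤t_n≤c} ∏_{i=1}^n f_i(t_i) dt_1⋯dt_n = Σ_{j=0}^{n} ( ∫_{a≤t_1≤⋯≤t_j≤b} ∏_{i=1}^{j} f_i(t_i) dt_1⋯dt_j ) · ( ∫_{b≤t_{j+1}≤⋯≤t_n≤c} ∏_{i=j+1}^{n} f_i(t_i) dt_{j+1}⋯dt_n ), where the empty integrals (j = 0 or j = n) are taken to be 1. (This is the composition-of-paths formula for iterated integrals.) -/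
/-!
Cut the simplex `a ≤ t₁ ≤ ⋯ ≤ t_n ≤ c` into the pieces where `t₁, …, t_j ∈ [a, b]` and
`t_{j+1}, …, t_n ∈ [b, c]`. Separating the first `j` coordinates from the last `n - j`, each piece
is a product of two smaller simplices, so by Fubini its integral is the `j`-th summand. The pieces
cover the simplex because the coordinates are ordered, and two of them meet only inside a
hyperplane `t_i = b`, which is null.
-/

open MeasureTheory Set

/-- The closed ordered simplex u ≤ t₁ ≤ ⋯ ≤ t_m ≤ v. -/
def closedSimplex (m : ℕ) (u v : ℝ) : Set (Fin m → ℝ) :=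
  {t | (∀ i, u ≤ t i ∧ t i ≤ v) ∧ ∀ i j : Fin m, i ≤ j → t i ≤ t j}

/-- The iterated integral `∫_{u ≤ t₁ ≤ ⋯ ≤ t_m ≤ v} ∏ᵢ fᵢ(tᵢ) dt₁⋯dt_m`.
For `m = 0` this equals `1`. -/
noncomputable def iterInt (m : ℕ) (u v : ℝ) (f : Fin m → ℝ → ℝ) : ℝ :=
  ∫ t in closedSimplex m u v, ∏ i, f i (t i)

lemma closedSimplex_eq_pi_inter_monotone (m : ℕ) (u v : ℝ) :
    closedSimplex m u v = univ.pi (fun _ => Icc u v) ∩ {t | Monotone t} := by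
  ext t
  exact and_congr (by simp only [mem_pi, mem_univ, mem_Icc, true_imp_iff]) Iff.rfl

lemma isCompact_closedSimplex (m : ℕ) (u v : ℝ) : IsCompact (closedSimplex m u v) := by
  rw [closedSimplex_eq_pi_inter_monotone]
  exact (isCompact_univ_pi fun _ => isCompact_Icc).inter_right isClosed_monotone

lemma measurableSet_closedSimplex (m : ℕ) (u v : ℝ) : MeasurableSet (closedSimplex m u v) :=
  (isCompact_closedSimplex m u v).isClosed.measurableSet

lemma integrableOn_closedSimplex_prod {m : ℕ} {u v : ℝ} {f : Fin m → ℝ → ℝ}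
    (hf : ∀ i, ContinuousOn (f i) (Icc u v)) :
    IntegrableOn (fun t => ∏ i, f i (t i)) (closedSimplex m u v) := by
  refine (continuousOn_finsetProd _ fun i _ => ?_).integrableOn_compact
    (isCompact_closedSimplex m u v)
  exact (hf i).comp (continuous_apply i).continuousOn fun t ht => (ht.1 i)

section Split

variable {n : ℕ} (j : Fin (n + 1))

def finSplitEquiv : Fin j ⊕ Fin (n - j) ≃ Fin n :=
  finSumFinEquiv.trans (finCongr (by have := j.is_le; omega))

lemma finSplitEquiv_inl (k : Fin j) : finSplitEquiv j (.inl k) = Fin.castLE j.is_le k := by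
  ext; simp [finSplitEquiv]

lemma finSplitEquiv_inr (k : Fin (n - j)) :
    finSplitEquiv j (.inr k) = ⟨j + k, Nat.add_lt_of_lt_sub' k.isLt⟩ := by
  ext; simp [finSplitEquiv]

noncomputable def piSplitEquiv : (Fin j → ℝ) × (Fin (n - j) → ℝ) ≃ᵐ (Fin n → ℝ) :=
  (MeasurableEquiv.sumPiEquivProdPi fun _ => ℝ).symm.trans
    (MeasurableEquiv.piCongrLeft (fun _ => ℝ) (finSplitEquiv j))

lemma measurePreserving_piSplitEquiv : MeasurePreserving (piSplitEquiv j) :=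
  (volume_measurePreserving_piCongrLeft (fun _ => ℝ) (finSplitEquiv j)).comp
    (volume_measurePreserving_sumPiEquivProdPi_symm fun _ => ℝ)

lemma piSplitEquiv_apply_finSplitEquiv (p : (Fin j → ℝ) × (Fin (n - j) → ℝ))
    (s : Fin j ⊕ Fin (n - j)) :
    piSplitEquiv j p (finSplitEquiv j s) = Sum.elim p.1 p.2 s := by
  rw [piSplitEquiv, MeasurableEquiv.trans_apply, MeasurableEquiv.piCongrLeft_apply_apply]
  cases s <;> rfl

lemma piSplitEquiv_symm_apply (t : Fin n → ℝ) :
    (piSplitEquiv j).symm t =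
      (fun k : Fin j => t (Fin.castLE j.is_le k),
        fun k : Fin (n - j) => t ⟨j + k, Nat.add_lt_of_lt_sub' k.isLt⟩) := by
  rw [MeasurableEquiv.symm_apply_eq]
  funext i
  obtain ⟨k | k, rfl⟩ := (finSplitEquiv j).surjective i
  · rw [piSplitEquiv_apply_finSplitEquiv, finSplitEquiv_inl]; rfl
  · rw [piSplitEquiv_apply_finSplitEquiv, finSplitEquiv_inr]; rfl

lemma prod_piSplitEquiv (f : Fin n → ℝ → ℝ) (p : (Fin j → ℝ) × (Fin (n - j) → ℝ)) :
    ∏ i, f i (piSplitEquiv j p i) =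
      (∏ k, f (Fin.castLE j.is_le k) (p.1 k)) *
        ∏ k : Fin (n - j), f ⟨j + k, Nat.add_lt_of_lt_sub' k.isLt⟩ (p.2 k) := by
  rw [← (finSplitEquiv j).prod_comp, Fintype.prod_sum_type]
  simp only [piSplitEquiv_apply_finSplitEquiv, Sum.elim_inl, Sum.elim_inr]
  simp only [finSplitEquiv_inl, finSplitEquiv_inr]

lemma setIntegral_image_piSplitEquiv (f : Fin n → ℝ → ℝ) (s : Set (Fin j → ℝ))
    (s' : Set (Fin (n - j) → ℝ)) :
    ∫ t in piSplitEquiv j '' (s ×ˢ s'), ∏ i, f i (t i) =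
      (∫ x in s, ∏ k, f (Fin.castLE j.is_le k) (x k)) *
        ∫ y in s', ∏ k : Fin (n - j), f ⟨j + k, Nat.add_lt_of_lt_sub' k.isLt⟩ (y k) := by
  rw [(measurePreserving_piSplitEquiv j).setIntegral_image_emb
    (piSplitEquiv j).measurableEmbedding]
  simp_rw [prod_piSplitEquiv]
  rw [Measure.volume_eq_prod]
  exact setIntegral_prod_mul (fun x : Fin j → ℝ => ∏ k, f (Fin.castLE j.is_le k) (x k))
    (fun y : Fin (n - j) → ℝ => ∏ k : Fin (n - j), f ⟨j + k, Nat.add_lt_of_lt_sub' k.isLt⟩ (y k))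
    s s'

end Split

def simplexPiece (n : ℕ) (a b c : ℝ) (j : Fin (n + 1)) : Set (Fin n → ℝ) :=
  {t | (fun k : Fin j => t (Fin.castLE j.is_le k)) ∈ closedSimplex j a b ∧
    (fun k : Fin (n - j) => t ⟨j + k, Nat.add_lt_of_lt_sub' k.isLt⟩) ∈ closedSimplex (n - j) b c}

lemma simplexPiece_eq_image (n : ℕ) (a b c : ℝ) (j : Fin (n + 1)) :
    simplexPiece n a b c j =
      piSplitEquiv j '' (closedSimplex j a b ×ˢ closedSimplex (n - j) b c) := by
  ext t
  rw [MeasurableEquiv.image_eq_preimage_symm, mem_preimage, piSplitEquiv_symm_apply]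
  rfl

lemma measurableSet_simplexPiece (n : ℕ) (a b c : ℝ) (j : Fin (n + 1)) :
    MeasurableSet (simplexPiece n a b c j) := by
  rw [simplexPiece_eq_image]
  exact (piSplitEquiv j).measurableSet_image.2
    ((measurableSet_closedSimplex _ _ _).prod (measurableSet_closedSimplex _ _ _))

lemma aedisjoint_simplexPiece {n : ℕ} {a b c : ℝ} {j k : Fin (n + 1)} (hjk : j < k) :
    AEDisjoint volume (simplexPiece n a b c j) (simplexPiece n a b c k) := by
  have hj : (j : ℕ) < n := Fin.lt_def.1 hjk |>.trans_le k.is_le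
  have hnull : volume {t : Fin n → ℝ | t ⟨j, hj⟩ = b} = 0 := by
    rw [volume_pi]
    exact Measure.pi_hyperplane _ _ _
  -- Coordinate `j` opens the upper block of piece `j` and lies in the lower block of piece `k`.
  exact measure_mono_null
    (fun t ht => le_antisymm (ht.2.1.1 ⟨j, hjk⟩).2 (ht.1.2.1 ⟨0, by omega⟩).1) hnull

lemma simplexPiece_subset {n : ℕ} {a b c : ℝ} (hab : a ≤ b) (hbc : b ≤ c) (j : Fin (n + 1)) :
    simplexPiece n a b c j ⊆ closedSimplex n a c := by
  rintro t ⟨⟨hx_bd, hx_mono⟩, ⟨hy_bd, hy_mono⟩⟩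
  refine ⟨fun i => ?_, fun i i' hii' => ?_⟩
  · obtain ⟨k | k, rfl⟩ := (finSplitEquiv j).surjective i
    · rw [finSplitEquiv_inl]
      exact ⟨(hx_bd k).1, (hx_bd k).2.trans hbc⟩
    · rw [finSplitEquiv_inr]
      exact ⟨hab.trans (hy_bd k).1, (hy_bd k).2⟩
  · obtain ⟨k | k, rfl⟩ := (finSplitEquiv j).surjective i <;>
      obtain ⟨k' | k', rfl⟩ := (finSplitEquiv j).surjective i' <;>
      simp only [finSplitEquiv_inl, finSplitEquiv_inr, Fin.le_def, Fin.val_castLE] at hii' ⊢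
    · exact hx_mono k k' hii'
    · exact (hx_bd k).2.trans (hy_bd k').1
    · omega
    · exact hy_mono k k' (Nat.le_of_add_le_add_left hii')

lemma exists_mem_simplexPiece {n : ℕ} {a b c : ℝ} {t : Fin n → ℝ}
    (ht : t ∈ closedSimplex n a c) : ∃ j, t ∈ simplexPiece n a b c j := by
  classical
  -- The piece is indexed by the first position from which on all coordinates are `≥ b`.
  have hP : ∃ m, m ≤ n ∧ ∀ i : Fin n, m ≤ i → b ≤ t i := ⟨n, le_rfl, fun i hi => by omega⟩
  obtain ⟨hjn, hbj⟩ := Nat.find_spec hP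
  refine ⟨⟨Nat.find hP, Nat.lt_succ_of_le hjn⟩,
    ⟨fun k => ⟨(ht.1 _).1, ?_⟩, fun k k' h => ht.2 _ _ h⟩,
    ⟨fun k => ⟨hbj _ (Nat.le_add_right _ _), (ht.1 _).2⟩, fun k k' h => ht.2 _ _ ?_⟩⟩
  · obtain ⟨i, hki, hi⟩ : ∃ i : Fin n, (k : ℕ) ≤ i ∧ t i < b := by
      have := Nat.find_min hP k.isLt
      push Not at this
      exact this (k.isLt.le.trans hjn)
    exact (ht.2 _ i hki).trans hi.le
  · exact Nat.add_le_add_left h _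

lemma iUnion_simplexPiece {n : ℕ} {a b c : ℝ} (hab : a ≤ b) (hbc : b ≤ c) :
    ⋃ j, simplexPiece n a b c j = closedSimplex n a c :=
  (iUnion_subset (simplexPiece_subset hab hbc)).antisymm fun _ ht =>
    mem_iUnion.2 (exists_mem_simplexPiece ht)

/-- Composition-of-paths formula for iterated integrals: for `a ≤ b ≤ c` and continuous
`f₁, …, f_n` on `[a,c]`,
`∫_{a≤t₁≤⋯≤t_n≤c} ∏ fᵢ(tᵢ) = Σ_{j=0}^{n} (∫_{a≤t₁≤⋯≤t_j≤b} ∏_{i≤j} fᵢ(tᵢ)) ·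
(∫_{b≤t_{j+1}≤⋯≤t_n≤c} ∏_{i>j} fᵢ(tᵢ))`. -/
theorem stmt3 (n : ℕ) (a b c : ℝ) (hab : a ≤ b) (hbc : b ≤ c)
    (f : Fin n → ℝ → ℝ) (hf : ∀ i, ContinuousOn (f i) (Set.Icc a c)) :
    iterInt n a c f =
      ∑ j : Fin (n + 1),
        iterInt j a b (fun i => f (Fin.castLE (Fin.is_le j) i)) *
          iterInt (n - j) b c
            (fun i => f ⟨(j : ℕ) + i, by have := i.isLt; have := j.isLt; omega⟩) := by
  rw [iterInt, ← iUnion_simplexPiece hab hbc,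
    integral_iUnion_ae (fun j => (measurableSet_simplexPiece n a b c j).nullMeasurableSet)
      ((Std.Symm.pairwise_on _).2 fun _ _ => aedisjoint_simplexPiece)
      (by rw [iUnion_simplexPiece hab hbc]; exact integrableOn_closedSimplex_prod hf),
    tsum_fintype]
  refine Finset.sum_congr rfl fun j _ => ?_
  rw [simplexPiece_eq_image, setIntegral_image_piSplitEquiv]
  rfl
end

section
/- For all real numbers x, y with 0 < x < 1, 0 < y < 1 and x ≠ y, one has ∫_0^1 log(1−t) / ((1−tx)(1−ty)) dt = (1/(x−y)) · ( (1/2)·log(1−y)² − (1/2)·log(1−x)² − Li_2(x) + Li_2(y) ). -/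
/-- The polylogarithm `Li_s(z) = Σ_{k ≥ 1} z^k / k^s`. -/
noncomputable def Li (s : ℕ) (z : ℝ) : ℝ := ∑' k : ℕ, z ^ (k + 1) / ((k : ℝ) + 1) ^ s

open Real Filter Set Topology MeasureTheory intervalIntegral

/-!
Partial fractions reduce the integral to `I(x) = ∫₀¹ log(1-t) · x/(1-tx) dt`.
With `w = x(1-t)/(1-tx)`, so that `1 - w = (1-x)/(1-tx)`, the function
`Li₂(w) + ½ log²(1-w) + log(1-t) log(1-w)` is a primitive of this integrand on `[0, 1)`.
It stays continuous at `t = 1`, where `log(1-w)` vanishes to first order and so kills the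
logarithmic singularity of `log(1-t)`; evaluating at the endpoints gives
`I(x) = -Li₂(x) - ½ log²(1-x)`.
-/

lemma Li_zero_right (s : ℕ) : Li s 0 = 0 := by
  simp [Li]

lemma Li_one {z : ℝ} (hz : |z| < 1) : Li 1 z = -log (1 - z) := by
  simpa [Li] using (hasSum_pow_div_log_of_abs_lt_one hz).tsum_eq

lemma hasDerivAt_Li_succ_tsum (s : ℕ) {z : ℝ} (hz : |z| < 1) :
    HasDerivAt (Li (s + 1)) (∑' k : ℕ, z ^ k / ((k : ℝ) + 1) ^ s) z := by
  obtain ⟨r, hzr, hr1⟩ := exists_between hz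
  have hr0 : 0 < r := (abs_nonneg z).trans_lt hzr
  refine hasDerivAt_tsum_of_isPreconnected (u := fun n ↦ r ^ n)
    (g' := fun (n : ℕ) (y : ℝ) ↦ y ^ n / ((n : ℝ) + 1) ^ s)
    (summable_geometric_of_lt_one hr0.le hr1) Metric.isOpen_ball
    (convex_ball 0 r).isPreconnected (fun n y _ ↦ ?_) (fun n y hy ↦ ?_)
    (Metric.mem_ball_self hr0) (by simp) (by simpa using hzr)
  · refine ((hasDerivAt_pow (n + 1) y).div_const (((n : ℝ) + 1) ^ (s + 1))).congr_deriv ?_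
    push_cast
    rw [pow_succ _ s, mul_comm _ (y ^ n), mul_div_mul_right _ _ (by positivity)]
  · have hy : |y| ≤ r := by simpa using (Metric.mem_ball.1 hy).le
    rw [norm_div, norm_pow, norm_pow, Real.norm_eq_abs, Real.norm_of_nonneg (by positivity)]
    exact (div_le_self (by positivity) (one_le_pow₀ (le_add_of_nonneg_left n.cast_nonneg))).trans
      (pow_le_pow_left₀ (abs_nonneg y) hy n)

lemma hasDerivAt_Li_succ (s : ℕ) {z : ℝ} (hz : |z| < 1) (hz0 : z ≠ 0) :
    HasDerivAt (Li (s + 1)) (Li s z / z) z := by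
  convert hasDerivAt_Li_succ_tsum s hz using 1
  rw [Li, div_eq_iff hz0, ← tsum_mul_right]
  simp_rw [pow_succ, mul_div_right_comm]

lemma hasDerivAt_Li_two {z : ℝ} (hz : |z| < 1) (hz0 : z ≠ 0) :
    HasDerivAt (Li 2) (-log (1 - z) / z) z := by
  simpa [Li_one hz] using hasDerivAt_Li_succ 1 hz hz0

lemma continuousAt_log_sub_mul {f : ℝ → ℝ} {a : ℝ} (hf : DifferentiableAt ℝ f a)
    (hfa : f a = 0) : ContinuousAt (fun t ↦ log (a - t) * f t) a := by
  rw [← continuousWithinAt_compl_self, ContinuousWithinAt, hfa, mul_zero]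
  -- off `a`, the function equals `-((a - t) log (a - t)) · slope f a t`
  have hmul : Tendsto (fun t ↦ (a - t) * log (a - t)) (𝓝[≠] a) (𝓝 0) := by
    have := (continuous_mul_log.comp (continuous_sub_left a)).tendsto a
    simpa [Function.comp_def] using this.mono_left nhdsWithin_le_nhds
  have := (hmul.mul (hasDerivAt_iff_tendsto_slope.1 hf.hasDerivAt)).neg
  rw [zero_mul, neg_zero] at this
  refine this.congr' (eventually_nhdsWithin_of_forall fun t (ht : t ≠ a) ↦ ?_)
  rw [slope_def_field, hfa, sub_zero]
  field_simp [sub_ne_zero.2 ht, sub_ne_zero.2 ht.symm]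
  ring

section Primitive

variable {x : ℝ}

lemma one_sub_mul_pos (hx : |x| < 1) {t : ℝ} (ht0 : 0 ≤ t) (ht1 : t ≤ 1) : 0 < 1 - t * x := by
  nlinarith [le_abs_self x, abs_nonneg x]

lemma abs_mul_one_sub_div_le (hx : |x| < 1) {t : ℝ} (ht0 : 0 ≤ t) (ht1 : t ≤ 1) :
    |x * (1 - t) / (1 - t * x)| ≤ |x| := by
  have hpos := one_sub_mul_pos hx ht0 ht1
  rw [abs_div, abs_mul, abs_of_nonneg (sub_nonneg.2 ht1), abs_of_pos hpos,
    div_le_iff₀ hpos]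
  gcongr
  nlinarith [le_abs_self x]

lemma intervalIntegrable_log_one_sub_mul_div (hx : |x| < 1) :
    IntervalIntegrable (fun t ↦ log (1 - t) * (x / (1 - t * x))) volume 0 1 := by
  have hlog : IntervalIntegrable (fun t ↦ log (1 - t)) volume 0 1 := by
    simpa using (intervalIntegrable_log' (a := 1) (b := 0)).comp_sub_left 1
  refine hlog.mul_continuousOn (continuousOn_const.div (by fun_prop) fun t ht ↦ ?_)
  rw [uIcc_of_le zero_le_one] at ht
  exact (one_sub_mul_pos hx ht.1 ht.2).ne'

noncomputable def dilogPrimitive (x t : ℝ) : ℝ :=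
  Li 2 (x * (1 - t) / (1 - t * x)) + log ((1 - x) / (1 - t * x)) ^ 2 / 2 +
    log (1 - t) * log ((1 - x) / (1 - t * x))

lemma dilogPrimitive_zero : dilogPrimitive x 0 = Li 2 x + log (1 - x) ^ 2 / 2 := by
  simp [dilogPrimitive]

lemma dilogPrimitive_one : dilogPrimitive x 1 = 0 := by
  rcases eq_or_ne (1 - x) 0 with h | h <;> simp [dilogPrimitive, h, Li_zero_right]

lemma hasDerivAt_one_sub_mul (x t : ℝ) : HasDerivAt (fun t ↦ 1 - t * x) (-x) t := by
  simpa using ((hasDerivAt_id t).mul_const x).const_sub 1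

lemma hasDerivAt_log_div_one_sub_mul (hx : x ≠ 1) {t : ℝ} (ht : 1 - t * x ≠ 0) :
    HasDerivAt (fun t ↦ log ((1 - x) / (1 - t * x))) (x / (1 - t * x)) t := by
  refine ((hasDerivAt_const t (1 - x)).div (hasDerivAt_one_sub_mul x t) ht).log
    (div_ne_zero (sub_ne_zero.2 hx.symm) ht) |>.congr_deriv ?_
  rw [Pi.div_apply]
  field_simp [sub_ne_zero.2 hx.symm]
  ring

lemma hasDerivAt_dilogPrimitive (hx : |x| < 1) (hx0 : x ≠ 0) {t : ℝ} (ht0 : 0 ≤ t)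
    (ht1 : t < 1) :
    HasDerivAt (dilogPrimitive x) (log (1 - t) * (x / (1 - t * x))) t := by
  have hpos := one_sub_mul_pos hx ht0 ht1.le
  have hpos' : 1 - x * t ≠ 0 := by rw [mul_comm]; exact hpos.ne'
  have hx1 : x ≠ 1 := fun h ↦ by simp [h] at hx
  have ht : 1 - t ≠ 0 := sub_ne_zero.2 ht1.ne'
  have hw : HasDerivAt (fun t ↦ x * (1 - t) / (1 - t * x))
      (x * (x - 1) / (1 - t * x) ^ 2) t := by
    refine (((hasDerivAt_id t).const_sub 1).const_mul x |>.div (hasDerivAt_one_sub_mul x t)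
      hpos.ne').congr_deriv ?_
    simp only [id]
    field_simp
    ring
  have hLi := hasDerivAt_Li_two ((abs_mul_one_sub_div_le hx ht0 ht1.le).trans_lt hx)
    (div_ne_zero (mul_ne_zero hx0 ht) hpos.ne')
  have hone_sub : 1 - x * (1 - t) / (1 - t * x) = (1 - x) / (1 - t * x) := by
    field_simp
    ring
  rw [hone_sub] at hLi
  have hℓ := hasDerivAt_log_div_one_sub_mul hx1 hpos.ne'
  have hlog : HasDerivAt (fun t ↦ log (1 - t)) (-1 / (1 - t)) t :=
    ((hasDerivAt_id t).const_sub 1).log ht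
  refine ((hLi.comp t hw).add ((hℓ.pow 2).div_const 2) |>.add (hlog.mul hℓ)).congr_deriv ?_
  generalize log ((1 - x) / (1 - t * x)) = ℓ
  field_simp
  ring

lemma continuousAt_dilogPrimitive_one (hx : |x| < 1) : ContinuousAt (dilogPrimitive x) 1 := by
  have hx1 : x ≠ 1 := fun h ↦ by simp [h] at hx
  have hden : 1 - 1 * x ≠ 0 := by rw [one_mul]; exact sub_ne_zero.2 hx1.symm
  have hℓ := hasDerivAt_log_div_one_sub_mul hx1 hden
  have hw : ContinuousAt (fun t ↦ x * (1 - t) / (1 - t * x)) 1 := by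
    fun_prop (disch := exact hden)
  have hLi : ContinuousAt (Li 2) 0 := (hasDerivAt_Li_succ_tsum 1 (by simp)).continuousAt
  refine ((hLi.comp_of_eq hw (by simp)).add ((hℓ.continuousAt.pow 2).div_const 2)).add ?_
  exact continuousAt_log_sub_mul hℓ.differentiableAt (by simp)

theorem integral_log_one_sub_mul_div_one_sub_mul (hx : |x| < 1) :
    ∫ t in (0 : ℝ)..1, log (1 - t) * (x / (1 - t * x)) = -Li 2 x - log (1 - x) ^ 2 / 2 := by
  rcases eq_or_ne x 0 with rfl | hx0
  · simp [Li_zero_right]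
  have hcont : ContinuousOn (dilogPrimitive x) (Icc 0 1) := by
    intro t ⟨ht0, ht1⟩
    rcases ht1.lt_or_eq with ht1 | rfl
    · exact (hasDerivAt_dilogPrimitive hx hx0 ht0 ht1).continuousAt.continuousWithinAt
    · exact (continuousAt_dilogPrimitive_one hx).continuousWithinAt
  rw [integral_eq_sub_of_hasDerivAt_of_le zero_le_one hcont
    (fun t ht ↦ hasDerivAt_dilogPrimitive hx hx0 ht.1.le ht.2)
    (intervalIntegrable_log_one_sub_mul_div hx), dilogPrimitive_one, dilogPrimitive_zero]
  ring

end Primitive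

/-- `∫₀¹ log(1-t)/((1-tx)(1-ty)) dt
  = (1/(x-y))·(½log(1-y)² - ½log(1-x)² - Li₂(x) + Li₂(y))` for `0 < x, y < 1`, `x ≠ y`. -/
theorem stmt6 (x y : ℝ) (hx0 : 0 < x) (hx1 : x < 1) (hy0 : 0 < y) (hy1 : y < 1)
    (hxy : x ≠ y) :
    ∫ t in (0:ℝ)..1, Real.log (1 - t) / ((1 - t * x) * (1 - t * y)) =
      (1 / (x - y)) *
        ((1 / 2) * Real.log (1 - y) ^ 2 - (1 / 2) * Real.log (1 - x) ^ 2 - Li 2 x + Li 2 y) := by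
  have hx : |x| < 1 := abs_lt.2 ⟨by linarith, hx1⟩
  have hy : |y| < 1 := abs_lt.2 ⟨by linarith, hy1⟩
  have hpartial : EqOn (fun t ↦ log (1 - t) / ((1 - t * x) * (1 - t * y)))
      (fun t ↦ (x - y)⁻¹ * (log (1 - t) * (x / (1 - t * x)) - log (1 - t) * (y / (1 - t * y))))
      (uIcc 0 1) := by
    intro t ht
    rw [uIcc_of_le zero_le_one] at ht
    have := (one_sub_mul_pos hx ht.1 ht.2).ne'
    have := (one_sub_mul_pos hy ht.1 ht.2).ne'
    field_simp [sub_ne_zero.2 hxy]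
    ring
  rw [integral_congr hpartial, intervalIntegral.integral_const_mul,
    integral_sub (intervalIntegrable_log_one_sub_mul_div hx)
      (intervalIntegrable_log_one_sub_mul_div hy),
    integral_log_one_sub_mul_div_one_sub_mul hx, integral_log_one_sub_mul_div_one_sub_mul hy]
  ring
end

section
/- For every real z with 0 < z < 1, one has ∫_0^1 (2·log(t) + 3)·(t−1)/(z·t−1) dt = (1/z²)·( z + 3(1−z)·log(1−z) + 2(1−z)·Li_2(z) ). -/
open Real MeasureTheory Set intervalIntegral

theorem continuous_pow_succ_mul_log (k : ℕ) : Continuous fun t : ℝ => t ^ (k + 1) * log t := by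
  simp_rw [pow_succ, mul_assoc]
  exact (continuous_pow k).mul continuous_mul_log

theorem hasDerivAt_pow_succ_mul_log_sub {k : ℕ} {x : ℝ} (hx : x ≠ 0) :
    HasDerivAt (fun t : ℝ => t ^ (k + 1) * log t / (k + 1) - t ^ (k + 1) / (k + 1) ^ 2)
      (x ^ k * log x) x := by
  have hk : (k : ℝ) + 1 ≠ 0 := by positivity
  refine ((((hasDerivAt_pow (k + 1) x).mul (hasDerivAt_log hx)).div_const ((k : ℝ) + 1)).sub
    ((hasDerivAt_pow (k + 1) x).div_const (((k : ℝ) + 1) ^ 2))).congr_deriv ?_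
  push_cast
  field_simp
  ring

theorem integral_pow_mul_log (k : ℕ) : ∫ t in (0 : ℝ)..1, t ^ k * log t = -1 / ((k : ℝ) + 1) ^ 2 := by
  rw [integral_eq_sub_of_hasDerivAt_of_le zero_le_one
    (((continuous_pow_succ_mul_log k).div_const _).sub
      ((continuous_pow _).div_const _)).continuousOn
    (fun x hx => hasDerivAt_pow_succ_mul_log_sub hx.1.ne')
    (intervalIntegrable_log'.continuousOn_mul (continuous_pow k).continuousOn)]
  simp only [Pi.sub_apply, one_pow, log_one, mul_zero, zero_pow k.succ_ne_zero, zero_mul, zero_div,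
    sub_zero]
  ring

theorem hasSum_integral_log_div_one_sub_mul {z : ℝ} (hz : |z| < 1) :
    HasSum (fun n : ℕ => -(z ^ n / ((n : ℝ) + 1) ^ 2)) (∫ t in (0 : ℝ)..1, log t / (1 - z * t)) := by
  have hint (n : ℕ) :
      ∫ t in (0 : ℝ)..1, (z * t) ^ n * log t = -(z ^ n / ((n : ℝ) + 1) ^ 2) := by
    simp only [mul_pow, mul_assoc, intervalIntegral.integral_const_mul, integral_pow_mul_log]
    ring
  have hsum := hasSum_integral_of_dominated_convergence (μ := volume) (a := 0) (b := 1)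
    (F := fun n (t : ℝ) => (z * t) ^ n * log t) (f := fun t => log t / (1 - z * t))
    (fun n t => |z| ^ n * |log t|) (fun n => by fun_prop) ?bound ?summable ?integrable ?lim
  · simpa only [hint] using hsum
  case bound =>
    refine fun n => ae_of_all _ fun t ht => ?_
    rw [uIoc_of_le zero_le_one] at ht
    rw [norm_mul, norm_pow, Real.norm_eq_abs, Real.norm_eq_abs, abs_mul, abs_of_pos ht.1]
    have := ht.1.le
    gcongr
    exact mul_le_of_le_one_right (abs_nonneg z) ht.2
  case summable =>
    exact ae_of_all _ fun t _ => (summable_geometric_of_lt_one (abs_nonneg z) hz).mul_right _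
  case integrable =>
    simp_rw [tsum_mul_right, tsum_geometric_of_lt_one (abs_nonneg z) hz]
    exact intervalIntegrable_log'.norm.const_mul _
  case lim =>
    refine ae_of_all _ fun t ht => ?_
    rw [uIoc_of_le zero_le_one] at ht
    have hzt : |z * t| < 1 := by
      rw [abs_mul, abs_of_pos ht.1]
      exact (mul_le_of_le_one_right (abs_nonneg z) ht.2).trans_lt hz
    simpa [div_eq_inv_mul] using (hasSum_geometric_of_abs_lt_one hzt).mul_right (log t)

theorem mul_integral_log_div_one_sub_mul {z : ℝ} (hz : |z| < 1) :
    z * ∫ t in (0 : ℝ)..1, log t / (1 - z * t) = -Li 2 z := by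
  rw [Li, ← neg_neg (z * _), ← neg_mul,
    ← ((hasSum_integral_log_div_one_sub_mul hz).mul_left (-z)).tsum_eq]
  congr 1
  exact tsum_congr fun k => by ring

theorem integral_inv_one_sub_mul {z : ℝ} (hz0 : z ≠ 0) (hz1 : z < 1) :
    ∫ t in (0 : ℝ)..1, (1 - z * t)⁻¹ = -log (1 - z) / z := by
  rw [integral_comp_sub_mul (fun x => x⁻¹) hz0, integral_inv]
  · simp only [mul_one, mul_zero, sub_zero, smul_eq_mul, one_div, log_inv]
    ring
  · simp only [mul_one, mul_zero, sub_zero, mem_uIcc]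
    rintro (⟨h, -⟩ | ⟨h, -⟩) <;> linarith

theorem one_sub_mul_pos_of_mem_Icc {z t : ℝ} (hz : z < 1) (ht : t ∈ Icc (0 : ℝ) 1) :
    0 < 1 - z * t := by
  rcases ht.1.eq_or_lt with rfl | ht0
  · simp
  · nlinarith [mul_lt_mul_of_pos_right hz ht0, ht.2]

/-- `∫₀¹ (2log t + 3)(t-1)/(zt-1) dt = (1/z²)(z + 3(1-z)log(1-z) + 2(1-z)Li₂(z))`
for `0 < z < 1`. -/
theorem stmt8 (z : ℝ) (hz0 : 0 < z) (hz1 : z < 1) :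
    ∫ t in (0:ℝ)..1, (2 * Real.log t + 3) * (t - 1) / (z * t - 1) =
      (1 / z ^ 2) * (z + 3 * (1 - z) * Real.log (1 - z) + 2 * (1 - z) * Li 2 z) := by
  have hpos (t : ℝ) (ht : t ∈ uIcc (0 : ℝ) 1) : 0 < 1 - z * t :=
    one_sub_mul_pos_of_mem_Icc hz1 (by rwa [uIcc_of_le zero_le_one] at ht)
  have hinv : ContinuousOn (fun t : ℝ => (1 - z * t)⁻¹) (uIcc 0 1) :=
    (continuousOn_const.sub (continuousOn_const.mul continuousOn_id)).inv₀
      fun t ht => (hpos t ht).ne'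
  have hlog_div : IntervalIntegrable (fun t => log t / (1 - z * t)) volume 0 1 := by
    simpa only [div_eq_mul_inv] using intervalIntegrable_log'.mul_continuousOn hinv
  have hsplit : EqOn (fun t => (2 * log t + 3) * (t - 1) / (z * t - 1))
      (fun t => (2 * log t + 3) / z
        - (1 - z) / z * (2 * (log t / (1 - z * t)) + 3 * (1 - z * t)⁻¹)) (uIcc 0 1) := by
    intro t ht
    have := (hpos t ht).ne'
    have : 1 - t * z ≠ 0 := by rwa [mul_comm]
    dsimp only
    rw [show z * t - 1 = -(1 - z * t) by ring]
    field_simp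
    ring
  have hlog := intervalIntegrable_log' (a := (0 : ℝ)) (b := 1)
  rw [integral_congr hsplit, intervalIntegral.integral_sub
      (((hlog.const_mul 2).add intervalIntegrable_const).div_const z)
      (((hlog_div.const_mul 2).add (hinv.intervalIntegrable.const_mul 3)).const_mul _),
    intervalIntegral.integral_div, intervalIntegral.integral_const_mul,
    intervalIntegral.integral_add (hlog.const_mul 2) intervalIntegrable_const,
    intervalIntegral.integral_add (hlog_div.const_mul 2) (hinv.intervalIntegrable.const_mul 3),
    intervalIntegral.integral_const_mul, intervalIntegral.integral_const_mul,
    intervalIntegral.integral_const_mul, integral_log, integral_inv_one_sub_mul hz0.ne' hz1]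
  have hLi := mul_integral_log_div_one_sub_mul (abs_lt.2 ⟨by linarith, hz1⟩)
  simp only [intervalIntegral.integral_const, smul_eq_mul, log_one, mul_zero, zero_mul, sub_zero,
    add_zero]
  field_simp
  linear_combination (-2 * (1 - z)) * hLi
end

section
/- For every real z with 0 < z < 1, one has ∫_0^1 (log(t)² + 3·log(t) + 1)·(t−1)/(z·t−1) dt = (1/z²)·( (1−z)·log(1−z) + 3(1−z)·Li_2(z) − 2(1−z)·Li_3(z) ). -/
open Real MeasureTheory intervalIntegral Set Filter Topology
open scoped Nat

lemma abs_log_pow_le {t : ℝ} (ht0 : 0 < t) (ht1 : t ≤ 1) (k : ℕ) :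
    |log t| ^ k ≤ 2 ^ k * k ! * t ^ (-(1 / 2) : ℝ) := by
  have hlog : log t ≤ 0 := log_nonpos ht0.le ht1
  have h := pow_div_factorial_le_exp (x := -log t / 2) (by linarith) k
  rw [show exp (-log t / 2) = t ^ (-(1 / 2) : ℝ) by rw [rpow_def_of_pos ht0]; ring_nf,
    div_pow, div_div, div_le_iff₀ (by positivity)] at h
  rw [abs_of_nonpos hlog]
  linarith

lemma intervalIntegrable_pow_mul_log_pow (n k : ℕ) :
    IntervalIntegrable (fun t => t ^ n * log t ^ k) volume 0 1 := by
  refine ((intervalIntegrable_rpow' (r := -(1 / 2)) (by norm_num)).const_mul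
    (2 ^ k * k !)).mono_fun (by fun_prop) ?_
  rw [uIoc_of_le zero_le_one]
  filter_upwards [ae_restrict_mem measurableSet_Ioc] with t ⟨ht0, ht1⟩
  rw [Real.norm_eq_abs, Real.norm_eq_abs, abs_mul, abs_pow, abs_pow, abs_of_pos ht0,
    abs_of_nonneg (mul_nonneg (by positivity) (rpow_nonneg ht0.le _))]
  calc t ^ n * |log t| ^ k ≤ 1 * (2 ^ k * k ! * t ^ (-(1 / 2) : ℝ)) :=
        mul_le_mul (pow_le_one₀ ht0.le ht1) (abs_log_pow_le ht0 ht1 k) (by positivity) zero_le_one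
    _ = _ := one_mul _

lemma tendsto_pow_succ_mul_log_pow_nhdsGT_zero (n k : ℕ) :
    Tendsto (fun t => t ^ (n + 1) * log t ^ k) (𝓝[>] 0) (𝓝 0) := by
  have hlim : Tendsto (fun t : ℝ => 2 ^ k * k ! * t ^ (1 / 2 : ℝ)) (𝓝[>] 0) (𝓝 0) := by
    have := ((continuous_rpow_const (by norm_num : (0 : ℝ) ≤ 1 / 2)).tendsto 0).const_mul
      (2 ^ k * (k ! : ℝ))
    simpa using this.mono_left nhdsWithin_le_nhds
  refine squeeze_zero_norm' ?_ hlim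
  filter_upwards [Ioc_mem_nhdsGT zero_lt_one] with t ⟨ht0, ht1⟩
  have hsplit : t ^ (1 / 2 : ℝ) = t * t ^ (-(1 / 2) : ℝ) := by
    rw [← rpow_one_add' ht0.le (by norm_num)]; norm_num
  rw [Real.norm_eq_abs, abs_mul, abs_pow, abs_pow, abs_of_pos ht0, hsplit]
  calc t ^ (n + 1) * |log t| ^ k ≤ t * (2 ^ k * k ! * t ^ (-(1 / 2) : ℝ)) :=
        mul_le_mul (pow_le_of_le_one ht0.le ht1 n.succ_ne_zero)
          (abs_log_pow_le ht0 ht1 k) (by positivity) ht0.le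
    _ = _ := by ring

lemma integral_pow_mul_log_pow_succ (n k : ℕ) :
    ∫ t in (0 : ℝ)..1, t ^ n * log t ^ (k + 1) =
      -((k + 1) / (n + 1)) * ∫ t in (0 : ℝ)..1, t ^ n * log t ^ k := by
  have hderiv : ∀ t ∈ Ioo (0 : ℝ) 1, HasDerivAt (fun t => t ^ (n + 1) * log t ^ (k + 1))
      ((n + 1) * (t ^ n * log t ^ (k + 1)) + (k + 1) * (t ^ n * log t ^ k)) t := by
    rintro t ⟨ht0, -⟩
    refine ((hasDerivAt_pow (n + 1) t).mul
      ((hasDerivAt_log ht0.ne').pow (k + 1))).congr_deriv ?_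
    simp only [Nat.add_sub_cancel, Pi.pow_apply]
    field_simp
    push_cast
    ring
  have hI := intervalIntegrable_pow_mul_log_pow n
  have hftc := integral_eq_sub_of_hasDerivAt_of_tendsto zero_lt_one hderiv
    (((hI (k + 1)).const_mul _).add ((hI k).const_mul _))
    (tendsto_pow_succ_mul_log_pow_nhdsGT_zero n (k + 1))
    ((show ContinuousAt (fun t => t ^ (n + 1) * log t ^ (k + 1)) 1 from
      (continuousAt_pow _ _).mul ((continuousAt_log one_ne_zero).pow _)).tendsto.mono_left
        nhdsWithin_le_nhds)
  rw [integral_add ((hI (k + 1)).const_mul _) ((hI k).const_mul _),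
    intervalIntegral.integral_const_mul, intervalIntegral.integral_const_mul] at hftc
  norm_num at hftc
  field_simp
  linarith

theorem integral_pow_mul_log_pow (n k : ℕ) :
    ∫ t in (0 : ℝ)..1, t ^ n * log t ^ k = (-1) ^ k * k ! / (n + 1) ^ (k + 1) := by
  induction k with
  | zero => simp [integral_pow]
  | succ k ih =>
    rw [integral_pow_mul_log_pow_succ, ih, Nat.factorial_succ]
    push_cast
    field_simp
    ring

theorem integral_pow_mul_log_sq_add (n : ℕ) (a b : ℝ) :
    ∫ t in (0 : ℝ)..1, t ^ n * (log t ^ 2 + a * log t + b) =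
      2 / (n + 1) ^ 3 - a / (n + 1) ^ 2 + b / (n + 1) := by
  have hI := intervalIntegrable_pow_mul_log_pow n
  have hsplit : (fun t => t ^ n * (log t ^ 2 + a * log t + b)) =
      fun t => t ^ n * log t ^ 2 + a * (t ^ n * log t ^ 1) + b * (t ^ n * log t ^ 0) := by
    ext t; ring
  rw [hsplit, integral_add ((hI 2).add ((hI 1).const_mul a)) ((hI 0).const_mul b),
    integral_add (hI 2) ((hI 1).const_mul a), intervalIntegral.integral_const_mul,
    intervalIntegral.integral_const_mul, integral_pow_mul_log_pow, integral_pow_mul_log_pow,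
    integral_pow_mul_log_pow]
  norm_num
  ring

theorem hasSum_integral_div_one_sub_mul {f : ℝ → ℝ} (hf : IntervalIntegrable f volume 0 1)
    {z : ℝ} (hz : |z| < 1) :
    HasSum (fun n => z ^ n * ∫ t in (0 : ℝ)..1, t ^ n * f t)
      (∫ t in (0 : ℝ)..1, f t / (1 - z * t)) := by
  have hterm : ∀ n : ℕ, z ^ n * ∫ t in (0 : ℝ)..1, t ^ n * f t =
      ∫ t in (0 : ℝ)..1, (z * t) ^ n * f t := by
    intro n
    simp only [mul_pow, mul_assoc, intervalIntegral.integral_const_mul]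
  simp only [hterm]
  have hmem : ∀ᵐ t ∂volume, t ∈ uIoc (0 : ℝ) 1 → |z * t| ≤ |z| := by
    refine ae_of_all _ fun t ht => ?_
    rw [uIoc_of_le zero_le_one] at ht
    rw [abs_mul, abs_of_pos ht.1]
    exact mul_le_of_le_one_right (abs_nonneg z) ht.2
  refine intervalIntegral.hasSum_integral_of_dominated_convergence (fun n t => |z| ^ n * |f t|)
    (fun n => (by fun_prop : Continuous fun t => (z * t) ^ n).aestronglyMeasurable.mul
      hf.def'.aestronglyMeasurable) (fun n => ?_) ?_ ?_ ?_
  · filter_upwards [hmem] with t ht ht'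
    rw [norm_mul, norm_pow, Real.norm_eq_abs, Real.norm_eq_abs]
    exact mul_le_mul_of_nonneg_right (pow_le_pow_left₀ (abs_nonneg _) (ht ht') n) (abs_nonneg _)
  · exact ae_of_all _ fun t _ => (summable_geometric_of_lt_one (abs_nonneg z) hz).mul_right _
  · simp only [tsum_mul_right, tsum_geometric_of_lt_one (abs_nonneg z) hz]
    exact hf.abs.const_mul _
  · filter_upwards [hmem] with t ht ht'
    rw [div_eq_inv_mul]
    exact (hasSum_geometric_of_abs_lt_one ((ht ht').trans_lt hz)).mul_right (f t)

theorem integral_mul_sub_one_div_mul_sub_one {f : ℝ → ℝ} (hf : IntervalIntegrable f volume 0 1)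
    {z : ℝ} (hz : |z| < 1) (hz0 : z ≠ 0) :
    ∫ t in (0 : ℝ)..1, f t * (t - 1) / (z * t - 1) =
      z⁻¹ * (∫ t in (0 : ℝ)..1, f t) - (1 - z) / z * ∫ t in (0 : ℝ)..1, f t / (1 - z * t) := by
  have hden : ∀ t ∈ uIcc (0 : ℝ) 1, 1 - z * t ≠ 0 := by
    intro t ht
    rw [uIcc_of_le zero_le_one] at ht
    have : |z * t| < 1 := by
      rw [abs_mul, abs_of_nonneg ht.1]
      exact (mul_le_of_le_one_right (abs_nonneg z) ht.2).trans_lt hz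
    linarith [le_abs_self (z * t)]
  have hsplit : ∀ t ∈ uIcc (0 : ℝ) 1,
      f t * (t - 1) / (z * t - 1) = z⁻¹ * f t - (1 - z) / z * (f t / (1 - z * t)) := by
    intro t ht
    have h := hden t ht
    -- `field_simp` normalises `z * t` to `t * z` and only then looks for the side conditions
    rw [mul_comm z t] at h ⊢
    have h' : t * z - 1 ≠ 0 := fun h0 => h (by linarith)
    field_simp
    ring
  have hint : IntervalIntegrable (fun t => f t / (1 - z * t)) volume 0 1 := by
    simp only [div_eq_mul_inv]
    exact hf.mul_continuousOn
      ((by fun_prop : Continuous fun t : ℝ => 1 - z * t).continuousOn.inv₀ hden)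
  rw [integral_congr hsplit, integral_sub (hf.const_mul _) (hint.const_mul _),
    intervalIntegral.integral_const_mul, intervalIntegral.integral_const_mul]

lemma hasSum_Li (s : ℕ) {z : ℝ} (hz : |z| < 1) :
    HasSum (fun k : ℕ => z ^ (k + 1) / ((k : ℝ) + 1) ^ s) (Li s z) := by
  refine (Summable.of_norm_bounded
    ((summable_geometric_of_lt_one (abs_nonneg z) hz).mul_left |z|) fun k => ?_).hasSum
  rw [norm_div, norm_pow, norm_pow, Real.norm_eq_abs, ← pow_succ']
  exact div_le_self (by positivity)
    (one_le_pow₀ ((le_add_of_nonneg_left k.cast_nonneg).trans (le_abs_self _)))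

/-- `∫₀¹ (log²t + 3log t + 1)(t-1)/(zt-1) dt
  = (1/z²)((1-z)log(1-z) + 3(1-z)Li₂(z) - 2(1-z)Li₃(z))` for `0 < z < 1`. -/
theorem stmt9 (z : ℝ) (hz0 : 0 < z) (hz1 : z < 1) :
    ∫ t in (0:ℝ)..1, (Real.log t ^ 2 + 3 * Real.log t + 1) * (t - 1) / (z * t - 1) =
      (1 / z ^ 2) * ((1 - z) * Real.log (1 - z) + 3 * (1 - z) * Li 2 z - 2 * (1 - z) * Li 3 z) := by
  have hz : |z| < 1 := by rwa [abs_of_pos hz0]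
  set L : ℝ → ℝ := fun t => log t ^ 2 + 3 * log t + 1
  have hL : IntervalIntegrable L volume 0 1 := by
    simpa using ((intervalIntegrable_pow_mul_log_pow 0 2).add
      ((intervalIntegrable_pow_mul_log_pow 0 1).const_mul 3)).add
        (intervalIntegrable_pow_mul_log_pow 0 0)
  have hL_integral : ∫ t in (0 : ℝ)..1, L t = 0 := by
    simpa using (integral_pow_mul_log_sq_add 0 3 1).trans (by norm_num)
  have hmoments : HasSum (fun n => z ^ n * ∫ t in (0 : ℝ)..1, t ^ n * L t)
      ((2 * Li 3 z - 3 * Li 2 z - log (1 - z)) / z) := by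
    have h := ((((hasSum_Li 3 hz).mul_left 2).sub ((hasSum_Li 2 hz).mul_left 3)).add
      (hasSum_pow_div_log_of_abs_lt_one hz)).div_const z
    rw [← sub_eq_add_neg] at h
    refine h.congr_fun fun n => ?_
    rw [integral_pow_mul_log_sq_add]
    field_simp
    ring
  rw [integral_mul_sub_one_div_mul_sub_one hL hz hz0.ne', hL_integral,
    (hasSum_integral_div_one_sub_mul hL hz).unique hmoments]
  field_simp
  ring
end

section
/- For every integer N ≥ 0 there exist rational numbers a_N and b_N such that ∫_0^1 ∫_0^1 ( x·y·(1−x)·(1−y) / (1−x·y) )^N · (1/(1−x·y)) dx dy = a_N + b_N·ζ(2), the integral converging absolutely. (These are the basic cellular integrals for n = 5 and σ = (1,3,5,2,4), which reproduce the linear forms in 1 and ζ(2) from Apéry's irrationality proof of ζ(2).) -/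
/-!
Expanding `1 / (1 - xy) ^ (N + 1)` as a binomial series and integrating term by term (all terms
are nonnegative) turns the integral into `∑ₖ C(k+N, N) B(N+k+1, N+1)²`, whose summand is the
rational function `N! (k+1)⋯(k+N) / ((k+N+1)⋯(k+2N+1))²` of `k`. Its poles are at most double
and its degree is at most `-2`, so partial fractions write it as a ℚ-combination of
`1 / (k+j+1)` and `1 / (k+j+1)²`. The squares sum to `ζ(2)` minus a rational number; the simple
terms contribute `c H_K` plus a rational limit to the `K`-th partial sum, and `c = 0` because the
series converges.
-/

open MeasureTheory Filter Finset Topology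
open scoped Nat

noncomputable def zeta2 : ℝ := ∑' k : ℕ, 1 / ((k : ℝ) + 1) ^ 2

lemma integrable_and_hasSum_integral_of_nonneg {α : Type*} [MeasurableSpace α]
    {μ : Measure α} {F : ℕ → α → ℝ} {f : α → ℝ}
    (hF_int : ∀ k, Integrable (F k) μ) (hF_nonneg : ∀ k, 0 ≤ᵐ[μ] F k)
    (hF_sum : ∀ᵐ a ∂μ, HasSum (fun k => F k a) (f a))
    (hI : Summable fun k => ∫ a, F k a ∂μ) :
    Integrable f μ ∧ HasSum (fun k => ∫ a, F k a ∂μ) (∫ a, f a ∂μ) := by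
  have hF_nonneg' : ∀ᵐ a ∂μ, ∀ k, 0 ≤ F k a := ae_all_iff.2 hF_nonneg
  have hf_meas : AEStronglyMeasurable f μ :=
    aestronglyMeasurable_of_tendsto_ae atTop
      (fun n => (integrable_finsetSum (range n) fun k _ => hF_int k).1)
      (hF_sum.mono fun a ha => ha.tendsto_sum_nat)
  have hf_nonneg : 0 ≤ᵐ[μ] f := by
    filter_upwards [hF_sum, hF_nonneg'] with a ha h0 using ha.nonneg h0
  have hf_lint :
      ∫⁻ a, ENNReal.ofReal (f a) ∂μ = ENNReal.ofReal (∑' k, ∫ a, F k a ∂μ) := by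
    calc ∫⁻ a, ENNReal.ofReal (f a) ∂μ = ∫⁻ a, ∑' k, ENNReal.ofReal (F k a) ∂μ := by
          refine lintegral_congr_ae ?_
          filter_upwards [hF_sum, hF_nonneg'] with a ha h0
          rw [← ha.tsum_eq, ENNReal.ofReal_tsum_of_nonneg h0 ha.summable]
      _ = ∑' k, ∫⁻ a, ENNReal.ofReal (F k a) ∂μ :=
          lintegral_tsum fun k => (hF_int k).1.aemeasurable.ennreal_ofReal
      _ = ∑' k, ENNReal.ofReal (∫ a, F k a ∂μ) :=
          tsum_congr fun k => (ofReal_integral_eq_lintegral_ofReal (hF_int k) (hF_nonneg k)).symm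
      _ = ENNReal.ofReal (∑' k, ∫ a, F k a ∂μ) :=
          (ENNReal.ofReal_tsum_of_nonneg (fun k => integral_nonneg_of_ae (hF_nonneg k)) hI).symm
  refine ⟨⟨hf_meas, (hasFiniteIntegral_iff_ofReal hf_nonneg).2 (hf_lint ▸ ENNReal.ofReal_lt_top)⟩,
    ?_⟩
  rw [integral_eq_lintegral_of_nonneg_ae hf_nonneg hf_meas, hf_lint,
    ENNReal.toReal_ofReal (tsum_nonneg fun k => integral_nonneg_of_ae (hF_nonneg k))]
  exact hI.hasSum

lemma hasSum_zeta2 : HasSum (fun k : ℕ => 1 / ((k : ℝ) + 1) ^ 2) zeta2 := by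
  have h := (summable_nat_add_iff 1).2 (Real.summable_one_div_nat_pow.2 one_lt_two)
  push_cast at h
  exact h.hasSum

/-- The term `c H_K` carries the divergent part of simple poles, which cancels in summable
combinations. -/
noncomputable def zeta2Forms : Submodule ℚ (ℕ → ℝ) where
  carrier := {u | ∃ a b c : ℚ,
    Tendsto (fun K => ∑ k ∈ range K, u k - c * (harmonic K : ℝ)) atTop (𝓝 (a + b * zeta2))}
  zero_mem' := ⟨0, 0, 0, by simp⟩
  add_mem' := by
    rintro u v ⟨a, b, c, hu⟩ ⟨a', b', c', hv⟩
    refine ⟨a + a', b + b', c + c', ?_⟩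
    convert hu.add hv using 1
    · ext K
      simp only [Pi.add_apply, sum_add_distrib]
      push_cast
      ring
    · congr 1
      push_cast
      ring
  smul_mem' := by
    rintro r u ⟨a, b, c, hu⟩
    refine ⟨r * a, r * b, r * c, ?_⟩
    convert hu.const_mul (r : ℝ) using 1
    · ext K
      simp only [Pi.smul_apply, Rat.smul_def, ← mul_sum]
      push_cast
      ring
    · congr 1
      push_cast
      ring

lemma harmonic_eq_sum (n : ℕ) : (harmonic n : ℝ) = ∑ i ∈ range n, 1 / ((i : ℝ) + 1) := by
  simp [harmonic]

lemma sum_range_one_div_add (j K : ℕ) :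
    ∑ k ∈ range K, 1 / ((k : ℝ) + j + 1) = harmonic (j + K) - harmonic j := by
  rw [harmonic_eq_sum, harmonic_eq_sum, sum_range_add, add_sub_cancel_left]
  exact sum_congr rfl fun k _ => by push_cast; ring

lemma one_div_add_mem_zeta2Forms (j : ℕ) :
    (fun k : ℕ => 1 / ((k : ℝ) + j + 1)) ∈ zeta2Forms := by
  refine ⟨-harmonic j, 0, 1, ?_⟩
  have hvanish :
      Tendsto (fun K : ℕ => ∑ i ∈ range j, 1 / ((i : ℝ) + K + 1)) atTop (𝓝 0) := by
    simpa using tendsto_finsetSum (range j) fun i _ =>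
      (tendsto_const_nhds (x := (1 : ℝ))).div_atTop (tendsto_atTop_add_const_right _ 1
        (tendsto_atTop_add_const_left _ (i : ℝ) tendsto_natCast_atTop_atTop))
  convert hvanish.sub_const (harmonic j : ℝ) using 1
  · ext K
    rw [sum_range_one_div_add, sum_range_one_div_add, add_comm K j]
    push_cast
    ring
  · simp

lemma one_div_add_sq_mem_zeta2Forms (j : ℕ) :
    (fun k : ℕ => 1 / ((k : ℝ) + j + 1) ^ 2) ∈ zeta2Forms := by
  refine ⟨-∑ i ∈ range j, 1 / ((i : ℚ) + 1) ^ 2, 1, 0, ?_⟩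
  have hshift (K : ℕ) : ∑ k ∈ range K, 1 / ((k : ℝ) + j + 1) ^ 2 =
      ∑ i ∈ range (K + j), 1 / ((i : ℝ) + 1) ^ 2 -
        ∑ i ∈ range j, 1 / ((i : ℝ) + 1) ^ 2 := by
    rw [add_comm K j, sum_range_add, add_sub_cancel_left]
    exact sum_congr rfl fun k _ => by push_cast; ring
  convert (hasSum_zeta2.tendsto_sum_nat.comp (tendsto_add_atTop_nat j)).sub_const
    (∑ i ∈ range j, 1 / ((i : ℝ) + 1) ^ 2) using 1
  · ext K
    simp only [hshift, Function.comp, Rat.cast_zero, zero_mul, sub_zero]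
  · congr 1
    push_cast
    ring

lemma exists_tsum_eq_of_mem_zeta2Forms {u : ℕ → ℝ} (hu : u ∈ zeta2Forms)
    (hsum : Summable u) :
    ∃ a b : ℚ, ∑' k, u k = a + b * zeta2 := by
  obtain ⟨a, b, c, hlim⟩ := hu
  have hc : c = 0 := by
    by_contra hc
    have hH : Tendsto (fun K => (harmonic K : ℝ)) atTop
        (𝓝 ((∑' k, u k - (a + b * zeta2)) / c)) := by
      refine ((hsum.hasSum.tendsto_sum_nat.sub hlim).div_const (c : ℝ)).congr fun K => ?_
      field_simp
      ring
    refine not_tendsto_atTop_of_tendsto_nhds hH ?_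
    simpa [harmonic] using Real.tendsto_sum_range_one_div_nat_succ_atTop
  subst hc
  exact ⟨a, b, tendsto_nhds_unique hsum.hasSum.tendsto_sum_nat (by simpa using hlim)⟩

noncomputable def shiftedProd (s : Multiset ℕ) (k : ℕ) : ℝ :=
  (s.map fun j : ℕ => (k : ℝ) + j + 1).prod

@[simp] lemma shiftedProd_zero (k : ℕ) : shiftedProd 0 k = 1 := by simp [shiftedProd]

@[simp] lemma shiftedProd_cons (j : ℕ) (s : Multiset ℕ) (k : ℕ) :
    shiftedProd (j ::ₘ s) k = ((k : ℝ) + j + 1) * shiftedProd s k := by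
  simp [shiftedProd]

@[simp] lemma shiftedProd_add (s t : Multiset ℕ) (k : ℕ) :
    shiftedProd (s + t) k = shiftedProd s k * shiftedProd t k := by
  simp [shiftedProd]

lemma shiftedProd_pos (s : Multiset ℕ) (k : ℕ) : 0 < shiftedProd s k := by
  induction s using Multiset.induction_on with
  | empty => simp
  | cons j s ih => rw [shiftedProd_cons]; positivity

lemma shiftedProd_eq_mul_erase {s : Multiset ℕ} {j : ℕ} (hj : j ∈ s) (k : ℕ) :
    shiftedProd s k = ((k : ℝ) + j + 1) * shiftedProd (s.erase j) k := by
  rw [← shiftedProd_cons, Multiset.cons_erase hj]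

lemma one_div_shiftedProd_eq_sub {s : Multiset ℕ} {j l : ℕ} (hj : j ∈ s) (hl : l ∈ s)
    (hjl : j ≠ l) (k : ℕ) :
    1 / shiftedProd s k =
      1 / ((l : ℝ) - j) * (1 / shiftedProd (s.erase l) k - 1 / shiftedProd (s.erase j) k) := by
  have hl' : l ∈ s.erase j := (Multiset.mem_erase_of_ne hjl.symm).2 hl
  have hj' : j ∈ s.erase l := (Multiset.mem_erase_of_ne hjl).2 hj
  have hlj : (l : ℝ) - j ≠ 0 := sub_ne_zero.2 (Nat.cast_injective.ne hjl.symm)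
  have hs := shiftedProd_eq_mul_erase hj k
  have hsj := shiftedProd_eq_mul_erase hl' k
  have hsl := shiftedProd_eq_mul_erase hj' k
  rw [Multiset.erase_comm] at hsl
  rw [hs, hsj, hsl]
  have := shiftedProd_pos ((s.erase j).erase l) k
  field_simp
  ring

lemma one_div_shiftedProd_mem_zeta2Forms {s : Multiset ℕ} (hs : s ≠ 0)
    (hcount : ∀ j, s.count j ≤ 2) : (fun k => 1 / shiftedProd s k) ∈ zeta2Forms := by
  induction s using Multiset.strongInductionOn with
  | ih s IH =>
  obtain ⟨j, hj⟩ := Multiset.exists_mem_of_ne_zero hs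
  by_cases hdistinct : ∃ l ∈ s, l ≠ j
  · obtain ⟨l, hl, hlj⟩ := hdistinct
    have hmem {i i'} (hi : i ∈ s) (hi' : i' ∈ s) (hii' : i' ≠ i) :
        (fun k => 1 / shiftedProd (s.erase i) k) ∈ zeta2Forms :=
      IH _ (Multiset.erase_lt.2 hi)
        (fun h => by simpa [h] using (Multiset.mem_erase_of_ne hii').2 hi')
        fun i'' => (Multiset.count_le_of_le i'' (Multiset.erase_le i s)).trans (hcount i'')
    convert zeta2Forms.smul_mem (1 / ((l : ℚ) - j))
      (zeta2Forms.sub_mem (hmem hl hj hlj.symm) (hmem hj hl hlj)) using 1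
    ext k
    rw [one_div_shiftedProd_eq_sub hj hl hlj.symm k]
    simp [Rat.smul_def]
  · push Not at hdistinct
    have hrep : s = Multiset.replicate (Multiset.card s) j :=
      Multiset.eq_replicate_card.2 hdistinct
    have hcard : Multiset.card s ≤ 2 := by
      simpa [Multiset.count_eq_card.2 fun x hx => (hdistinct x hx).symm] using hcount j
    have hpos : 0 < Multiset.card s := Multiset.card_pos.2 hs
    interval_cases h : Multiset.card s
    · rw [hrep]
      simpa [shiftedProd] using one_div_add_mem_zeta2Forms j
    · rw [hrep]
      simpa [shiftedProd, sq] using one_div_add_sq_mem_zeta2Forms j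

lemma shiftedProd_cons_div {r s : Multiset ℕ} {j : ℕ} (i : ℕ) (hj : j ∈ s) (k : ℕ) :
    shiftedProd (i ::ₘ r) k / shiftedProd s k =
      shiftedProd r k / shiftedProd (s.erase j) k +
        ((i : ℝ) - j) * (shiftedProd r k / shiftedProd s k) := by
  rw [shiftedProd_cons, shiftedProd_eq_mul_erase hj]
  have := shiftedProd_pos (s.erase j) k
  field_simp
  ring

lemma shiftedProd_div_mem_zeta2Forms {r s : Multiset ℕ} (hrs : Multiset.card r < Multiset.card s)
    (hcount : ∀ j, s.count j ≤ 2) :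
    (fun k => shiftedProd r k / shiftedProd s k) ∈ zeta2Forms := by
  have hs : s ≠ 0 := Multiset.card_pos.1 (Nat.zero_lt_of_lt hrs)
  induction r using Multiset.induction_on generalizing s with
  | empty => simpa using one_div_shiftedProd_mem_zeta2Forms hs hcount
  | cons i r IH =>
    obtain ⟨j, hj⟩ := Multiset.exists_mem_of_ne_zero hs
    rw [Multiset.card_cons] at hrs
    have hrs' : Multiset.card r < Multiset.card (s.erase j) := by
      have := Multiset.card_erase_add_one hj
      omega
    have herase := IH hrs'
      (fun l => (Multiset.count_le_of_le l (Multiset.erase_le j s)).trans (hcount l))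
      (Multiset.card_pos.1 (Nat.zero_lt_of_lt hrs'))
    have hself := IH (Nat.lt_of_succ_lt hrs) hcount hs
    convert zeta2Forms.add_mem herase (zeta2Forms.smul_mem ((i : ℚ) - j) hself) using 1
    ext k
    rw [shiftedProd_cons_div i hj k]
    simp [Rat.smul_def]

lemma pow_card_le_shiftedProd (s : Multiset ℕ) (k : ℕ) :
    ((k : ℝ) + 1) ^ Multiset.card s ≤ shiftedProd s k := by
  induction s using Multiset.induction_on with
  | empty => simp
  | cons j s ih =>
    rw [shiftedProd_cons, Multiset.card_cons, pow_succ']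
    gcongr
    simp

lemma shiftedProd_le (s : Multiset ℕ) (k : ℕ) :
    shiftedProd s k ≤ shiftedProd s 0 * ((k : ℝ) + 1) ^ Multiset.card s := by
  induction s using Multiset.induction_on with
  | empty => simp
  | cons j s ih =>
    simp only [shiftedProd_cons, Nat.cast_zero, zero_add, Multiset.card_cons, pow_succ]
    have hj : (k : ℝ) + j + 1 ≤ (j + 1) * (k + 1) := by
      nlinarith [(Nat.cast_nonneg k : (0 : ℝ) ≤ k), (Nat.cast_nonneg j : (0 : ℝ) ≤ j)]
    have := shiftedProd_pos s k
    calc ((k : ℝ) + j + 1) * shiftedProd s k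
        ≤ ((j + 1) * (k + 1)) * (shiftedProd s 0 * ((k : ℝ) + 1) ^ Multiset.card s) := by gcongr
      _ = _ := by ring

lemma summable_shiftedProd_div {r s : Multiset ℕ}
    (hrs : Multiset.card r + 2 ≤ Multiset.card s) :
    Summable fun k => shiftedProd r k / shiftedProd s k := by
  refine Summable.of_nonneg_of_le
    (fun k => (div_pos (shiftedProd_pos r k) (shiftedProd_pos s k)).le) (fun k => ?_)
    (hasSum_zeta2.summable.mul_left (shiftedProd r 0))
  have hk : (1 : ℝ) ≤ (k : ℝ) + 1 := by simp
  calc shiftedProd r k / shiftedProd s k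
      ≤ shiftedProd r 0 * ((k : ℝ) + 1) ^ Multiset.card r /
          ((k : ℝ) + 1) ^ (Multiset.card r + 2) :=
        div_le_div₀ (by have := shiftedProd_pos r 0; positivity) (shiftedProd_le r k)
          (by positivity) ((pow_le_pow_right₀ hk hrs).trans (pow_card_le_shiftedProd s k))
    _ = shiftedProd r 0 * (1 / ((k : ℝ) + 1) ^ 2) := by
        field_simp
        ring

lemma shiftedProd_range (n k : ℕ) :
    shiftedProd (Multiset.range n) k = ((k + n).choose n : ℝ) * n ! := by
  have h := Nat.ascFactorial_eq_factorial_mul_choose k n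
  rw [Nat.ascFactorial_eq_prod_range] at h
  have h' := congrArg (Nat.cast : ℕ → ℝ) h
  push_cast at h'
  rw [mul_comm, ← h', shiftedProd, ← Finset.range_val, ← Finset.prod_eq_multiset_prod]
  exact prod_congr rfl fun j _ => by ring

lemma shiftedProd_map_add_range (m n k : ℕ) :
    shiftedProd ((Multiset.range n).map (m + ·)) k =
      ∏ j ∈ range n, (((m + k : ℕ) : ℝ) + 1 + j) := by
  rw [shiftedProd, Multiset.map_map, ← Finset.range_val, ← Finset.prod_eq_multiset_prod]
  exact prod_congr rfl fun j _ => by simp only [Function.comp]; push_cast; ring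

lemma integral_pow_mul_one_sub_pow (a b : ℕ) :
    ∫ x in Set.Ioo (0 : ℝ) 1, x ^ a * (1 - x) ^ b =
      b ! / ∏ j ∈ range (b + 1), ((a : ℝ) + 1 + j) := by
  have hre : 0 < ((a : ℂ) + 1).re := by simp; positivity
  have hβ := Complex.betaIntegral_eval_nat_add_one_right hre b
  have hcpx : Complex.betaIntegral ((a : ℂ) + 1) ((b : ℂ) + 1) =
      ((∫ x in (0 : ℝ)..1, x ^ a * (1 - x) ^ b : ℝ) : ℂ) := by
    rw [Complex.betaIntegral, ← intervalIntegral.integral_ofReal]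
    refine intervalIntegral.integral_congr fun x _ => ?_
    simp only [add_sub_cancel_right, Complex.cpow_natCast]
    push_cast
    ring
  rw [hcpx] at hβ
  rw [← integral_Ioc_eq_integral_Ioo, ← intervalIntegral.integral_of_le zero_le_one]
  apply Complex.ofReal_injective
  rw [hβ]
  push_cast
  ring

/-- The denominator of `∫ cellTerm N k` is `∏_{N ≤ j ≤ 2N} (k + j + 1)²`. -/
def cellPoles (N : ℕ) : Multiset ℕ :=
  (Multiset.range (N + 1)).map (N + ·) + (Multiset.range (N + 1)).map (N + ·)

noncomputable def cellTerm (N k : ℕ) (p : ℝ × ℝ) : ℝ :=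
  ((k + N).choose N : ℝ) * (p.1 ^ (N + k) * (1 - p.1) ^ N) * (p.2 ^ (N + k) * (1 - p.2) ^ N)

lemma hasSum_cellTerm (N : ℕ) {p : ℝ × ℝ} (hp : ‖p.1 * p.2‖ < 1) :
    HasSum (fun k => cellTerm N k p)
      ((p.1 * p.2 * (1 - p.1) * (1 - p.2) / (1 - p.1 * p.2)) ^ N * (1 / (1 - p.1 * p.2))) := by
  obtain ⟨x, y⟩ := p
  have hne : 1 - x * y ≠ 0 := by
    intro h
    rw [show x * y = 1 by linarith, norm_one] at hp
    exact lt_irrefl _ hp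
  have hsum := (hasSum_choose_mul_geometric_of_norm_lt_one N hp).mul_right
    ((x * (1 - x) * (y * (1 - y))) ^ N)
  rw [show 1 / (1 - x * y) ^ (N + 1) * (x * (1 - x) * (y * (1 - y))) ^ N =
      (x * y * (1 - x) * (1 - y) / (1 - x * y)) ^ N * (1 / (1 - x * y)) by
    rw [div_pow, pow_succ]
    field_simp] at hsum
  exact hsum.congr_fun fun k => by
    simp only [cellTerm, mul_pow, pow_add]
    ring

lemma integral_cellTerm (N k : ℕ) :
    ∫ p in Set.Ioo (0 : ℝ) 1 ×ˢ Set.Ioo (0 : ℝ) 1, cellTerm N k p =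
      N ! * (shiftedProd (Multiset.range N) k / shiftedProd (cellPoles N) k) := by
  simp only [cellTerm, cellPoles]
  rw [Measure.volume_eq_prod,
    setIntegral_prod_mul (fun x => ((k + N).choose N : ℝ) * (x ^ (N + k) * (1 - x) ^ N))
      (fun y => y ^ (N + k) * (1 - y) ^ N),
    integral_const_mul, integral_pow_mul_one_sub_pow, shiftedProd_add, shiftedProd_map_add_range,
    shiftedProd_range]
  have : 0 < ∏ j ∈ range (N + 1), (((N + k : ℕ) : ℝ) + 1 + j) :=
    prod_pos fun j _ => by positivity
  field_simp

lemma integrableOn_cellTerm (N k : ℕ) :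
    IntegrableOn (cellTerm N k) (Set.Ioo (0 : ℝ) 1 ×ˢ Set.Ioo (0 : ℝ) 1) :=
  ((by unfold cellTerm; fun_prop : Continuous (cellTerm N k)).continuousOn.integrableOn_compact
    (isCompact_Icc.prod isCompact_Icc)).mono_set
    (Set.prod_mono Set.Ioo_subset_Icc_self Set.Ioo_subset_Icc_self)

lemma cellTerm_nonneg (N k : ℕ) {p : ℝ × ℝ}
    (hp : p ∈ Set.Ioo (0 : ℝ) 1 ×ˢ Set.Ioo (0 : ℝ) 1) :
    0 ≤ cellTerm N k p := by
  obtain ⟨⟨hx₀, hx₁⟩, ⟨hy₀, hy₁⟩⟩ := hp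
  have : 0 ≤ 1 - p.1 := by linarith
  have : 0 ≤ 1 - p.2 := by linarith
  unfold cellTerm
  positivity

lemma card_cellPoles (N : ℕ) : Multiset.card (cellPoles N) = 2 * (N + 1) := by
  simp [cellPoles]
  ring

lemma count_cellPoles_le (N j : ℕ) : (cellPoles N).count j ≤ 2 := by
  have hnodup : ((Multiset.range (N + 1)).map (N + ·)).Nodup :=
    (Multiset.nodup_range _).map (add_right_injective N)
  have := Multiset.nodup_iff_count_le_one.1 hnodup j
  rw [cellPoles, Multiset.count_add]
  omega

/-- The basic cellular integrals for `n = 5`, `σ = (1,3,5,2,4)`: for every `N ≥ 0`,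
`∫₀¹∫₀¹ (xy(1-x)(1-y)/(1-xy))^N · (1/(1-xy)) dx dy` converges absolutely and is a
ℚ-linear form `a_N + b_N ζ(2)` (Apéry's linear forms for the irrationality of ζ(2)). -/
theorem stmt15 (N : ℕ) :
    ∃ aN bN : ℚ,
      IntegrableOn (fun p : ℝ × ℝ =>
          (p.1 * p.2 * (1 - p.1) * (1 - p.2) / (1 - p.1 * p.2)) ^ N * (1 / (1 - p.1 * p.2)))
        (Set.Ioo (0:ℝ) 1 ×ˢ Set.Ioo (0:ℝ) 1) ∧
      (∫ p in Set.Ioo (0:ℝ) 1 ×ˢ Set.Ioo (0:ℝ) 1,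
          (p.1 * p.2 * (1 - p.1) * (1 - p.2) / (1 - p.1 * p.2)) ^ N * (1 / (1 - p.1 * p.2))) =
        (aN : ℝ) + (bN : ℝ) * zeta2 := by
  have hcard := card_cellPoles N
  have hu_summable :
      Summable fun k => shiftedProd (Multiset.range N) k / shiftedProd (cellPoles N) k :=
    summable_shiftedProd_div (by simp [hcard]; omega)
  obtain ⟨a, b, hu⟩ := exists_tsum_eq_of_mem_zeta2Forms
    (shiftedProd_div_mem_zeta2Forms (by simp [hcard]; omega) (count_cellPoles_le N)) hu_summable
  have hS : MeasurableSet (Set.Ioo (0:ℝ) 1 ×ˢ Set.Ioo (0:ℝ) 1) :=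
    measurableSet_Ioo.prod measurableSet_Ioo
  have hsum := ae_restrict_of_forall_mem (μ := volume) hS
    fun p ⟨⟨hx₀, hx₁⟩, ⟨hy₀, hy₁⟩⟩ => hasSum_cellTerm N (p := p) <| by
      rw [Real.norm_of_nonneg (by positivity)]
      nlinarith
  obtain ⟨hint, hval⟩ := integrable_and_hasSum_integral_of_nonneg (integrableOn_cellTerm N)
    (fun k => ae_restrict_of_forall_mem hS fun _ => cellTerm_nonneg N k) hsum
    (by simpa only [integral_cellTerm] using hu_summable.mul_left (N ! : ℝ))
  refine ⟨N ! * a, N ! * b, hint, ?_⟩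
  rw [← hval.tsum_eq, tsum_congr (integral_cellTerm N), tsum_mul_left, hu]
  push_cast
  ring
end
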